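/- Assume F ⊆ Hom(S¹) and that the collection K_F of F-invariant minimal sets is finite with at least two elements. Then for every K ∈ K_F, the family E_K is finite. -/

import Mathlib

open MeasureTheory Set Function Filter Topology
open scoped ENNReal NNReal

noncomputable section

/-- The circle, modeled as `ℝ/ℤ`, with its (arc-length) quotient metric. -/
abbrev S1 : Type := AddCircle (1 : ℝ)

/-- The representative in `[0,1)` of a point of the circle. -/
def argS1 (x : S1) : ℝ := (AddCircle.equivIco 1 0 x : ℝ)

/-- The open arc traversed counterclockwise from `a` to `b`. -/
def openArc (a b : S1) : Set S1 := {x | 0 < argS1 (x - a) ∧ argS1 (x - a) < argS1 (b - a)}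

/-- The closed arc traversed counterclockwise from `a` to `b`; note `[a,a] = {a}`. -/
def closedArc (a b : S1) : Set S1 := insert a (insert b (openArc a b))

/-- Homeomorphisms of the circle. -/
abbrev HomS1 : Type := S1 ≃ₜ S1

/-- A circle homeomorphism is orientation preserving if it maps counterclockwise open
arcs onto counterclockwise open arcs. -/
def OrientationPreserving (f : HomS1) : Prop :=
  ∀ a b : S1, f '' openArc a b = openArc (f a) (f b)

/-- Membership in the semigroup generated by `F` (all finite compositions of members). -/
inductive InSemigroup (F : Set HomS1) : HomS1 → Prop
  | base : ∀ f ∈ F, InSemigroup F f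
  | comp : ∀ f g : HomS1, InSemigroup F f → InSemigroup F g → InSemigroup F (g.trans f)

/-- The semigroup `G_F` generated by `F`, as a set of homeomorphisms. -/
def semigroupOf (F : Set HomS1) : Set HomS1 := {g | InSemigroup F g}

/-- The orbit of `x` under the semigroup generated by `F`. -/
def orbitOf (F : Set HomS1) (x : S1) : Set S1 := {y | ∃ g ∈ semigroupOf F, g x = y}

/-- The semigroup generated by `F` has no finite orbit. -/
def NoFiniteOrbit (F : Set HomS1) : Prop := ∀ x : S1, (orbitOf F x).Infinite

/-- A set `K` is `F`-invariant if every `f ∈ F` maps it into itself. -/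
def InvariantUnder (F : Set HomS1) (K : Set S1) : Prop := ∀ f ∈ F, f '' K ⊆ K

/-- A nonempty closed `F`-invariant set having no nonempty closed `F`-invariant
proper subset. -/
def IsMinimalInvariant (F : Set HomS1) (K : Set S1) : Prop :=
  K.Nonempty ∧ IsClosed K ∧ InvariantUnder F K ∧
    ∀ K' ⊆ K, K'.Nonempty → IsClosed K' → InvariantUnder F K' → K' = K

/-- The collection `K_F` of `F`-invariant minimal sets. -/
def minimalSets (F : Set HomS1) : Set (Set S1) := {K | IsMinimalInvariant F K}

/-- The semigroup generated by `F` acts proximally on `I`. -/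
def ProximalOn (F : Set HomS1) (I : Set S1) : Prop :=
  ∀ x ∈ I, ∀ y ∈ I, ∃ g : ℕ → HomS1, (∀ n, g n ∈ semigroupOf F) ∧
    Tendsto (fun n => dist (g n x) (g n y)) atTop (𝓝 0)

/-- `L` is a finite union of closed arcs with endpoints in `K`. -/
def FiniteUnionOfArcsWithEndsIn (K L : Set S1) : Prop :=
  ∃ (n : ℕ) (a b : Fin n → S1), (∀ k, a k ∈ K) ∧ (∀ k, b k ∈ K) ∧
    L = ⋃ k, closedArc (a k) (b k)

/-- `L` is a finite union of closed arcs. -/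
def FiniteUnionOfClosedArcs (L : Set S1) : Prop :=
  ∃ (n : ℕ) (a b : Fin n → S1), L = ⋃ k, closedArc (a k) (b k)

/-- The number of connected components of `L ⊆ S¹`. -/
def numComponents (L : Set S1) : ℕ :=
  {C : Set S1 | ∃ x ∈ L, C = connectedComponentIn L x}.ncard

/-- `x` precedes `y` in the counterclockwise order of an arc starting at `a`. -/
def arcLE (a x y : S1) : Prop := argS1 (x - a) ≤ argS1 (y - a)

/-- `u` is monotone increasing on the closed arc `[a,b]` (counterclockwise order). -/
def MonotoneIncrOnArc (u : S1 → ℝ) (a b : S1) : Prop :=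
  ∀ x ∈ closedArc a b, ∀ y ∈ closedArc a b, arcLE a x y → u x ≤ u y

/-- `u` is monotone decreasing on the closed arc `[a,b]` (counterclockwise order). -/
def MonotoneDecrOnArc (u : S1 → ℝ) (a b : S1) : Prop :=
  ∀ x ∈ closedArc a b, ∀ y ∈ closedArc a b, arcLE a x y → u y ≤ u x

/-- A closed arc with endpoints in the minimal set `K` and disjoint from every other
minimal set of `F`. -/
def IsGapArc (F : Set HomS1) (K I : Set S1) : Prop :=
  (∃ x ∈ K, ∃ y ∈ K, I = closedArc x y) ∧
    ∀ K' ∈ minimalSets F, K' ≠ K → I ∩ K' = ∅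

/-- The family `E_K`: the maximal closed arcs with endpoints in `K` whose union is
disjoint from every other minimal set. -/
def EK (F : Set HomS1) (K : Set S1) : Set (Set S1) :=
  {I | IsGapArc F K I ∧ ∀ J, IsGapArc F K J → I ⊆ J → J = I}

/-! The minimal sets other than `K` form a closed set at some positive distance `δ` from `K`.
If two arcs of `E_K` start less than `δ` apart, the short arc joining their starting points
avoids the other minimal sets, and maximality forces the two arcs to coincide. Hence the
starting points of the arcs of `E_K` are `δ`-separated, so there are finitely many of them. -/

lemma argS1_nonneg (z : S1) : 0 ≤ argS1 z := (AddCircle.equivIco 1 0 z).2.1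

lemma argS1_lt_one (z : S1) : argS1 z < 1 := by
  simpa [argS1] using (AddCircle.equivIco 1 0 z).2.2

lemma coe_argS1 (z : S1) : ((argS1 z : ℝ) : S1) = z := AddCircle.coe_equivIco

lemma argS1_coe (r : ℝ) : argS1 (r : S1) = Int.fract r := by
  simp [argS1, AddCircle.coe_equivIco_mk_apply]

lemma argS1_injective : Injective argS1 :=
  Function.LeftInverse.injective coe_argS1

lemma argS1_zero : argS1 0 = 0 := by
  simpa using argS1_coe 0

lemma argS1_sub (u v : S1) : argS1 (u - v) = Int.fract (argS1 u - argS1 v) := by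
  rw [← argS1_coe, AddCircle.coe_sub, coe_argS1, coe_argS1]

lemma argS1_sub_of_le {u v : S1} (h : argS1 v ≤ argS1 u) :
    argS1 (u - v) = argS1 u - argS1 v := by
  rw [argS1_sub, Int.fract_eq_self]
  constructor <;> linarith [argS1_lt_one u, argS1_nonneg v]

lemma argS1_sub_of_lt {u v : S1} (h : argS1 u < argS1 v) :
    argS1 (u - v) = argS1 u - argS1 v + 1 := by
  rw [argS1_sub, ← Int.fract_add_one, Int.fract_eq_self]
  constructor <;> linarith [argS1_nonneg u, argS1_lt_one v]

lemma norm_le_argS1 (z : S1) : ‖z‖ ≤ argS1 z := by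
  conv_lhs => rw [← coe_argS1 z]
  exact (QuotientAddGroup.norm_mk_le_norm (S := AddSubgroup.zmultiples (1 : ℝ))).trans
    (abs_of_nonneg (argS1_nonneg z)).le

lemma norm_eq_argS1 {z : S1} (h : argS1 z ≤ 1 / 2) : ‖z‖ = argS1 z := by
  conv_lhs => rw [← coe_argS1 z]
  rw [(AddCircle.norm_coe_eq_abs_iff (p := 1) one_ne_zero).2, abs_of_nonneg (argS1_nonneg z)]
  rwa [abs_of_nonneg (argS1_nonneg z), abs_one]

lemma argS1_lt_or_argS1_neg_lt_of_norm_lt {z : S1} {δ : ℝ} (h : ‖z‖ < δ) :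
    argS1 z < δ ∨ argS1 (-z) < δ := by
  by_cases hz : argS1 z ≤ 1 / 2
  · exact Or.inl (norm_eq_argS1 hz ▸ h)
  · have hneg : argS1 (-z) = 1 - argS1 z := by
      rw [← zero_sub, argS1_sub_of_lt (by rw [argS1_zero]; linarith), argS1_zero]
      ring
    refine Or.inr ?_
    rwa [← norm_eq_argS1 (by linarith), norm_neg]

lemma mem_closedArc {a b z : S1} : z ∈ closedArc a b ↔ argS1 (z - a) ≤ argS1 (b - a) := by
  simp only [closedArc, openArc, mem_insert_iff, mem_ofPred_eq]
  constructor
  · rintro (rfl | rfl | ⟨-, h⟩)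
    · simpa [argS1_zero] using argS1_nonneg (b - z)
    · exact le_rfl
    · exact h.le
  · intro h
    rcases (argS1_nonneg (z - a)).eq_or_lt with h0 | h0
    · exact Or.inl (sub_eq_zero.mp (argS1_injective (h0.symm.trans argS1_zero.symm)))
    · rcases h.eq_or_lt with hb | hb
      · exact Or.inr (Or.inl (sub_left_injective (argS1_injective hb)))
      · exact Or.inr (Or.inr ⟨h0, hb⟩)

lemma closedArc_subset_or_subset (a b c : S1) :
    closedArc a b ⊆ closedArc a c ∨ closedArc a c ⊆ closedArc a b := by
  rcases le_total (argS1 (b - a)) (argS1 (c - a)) with h | h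
  · exact Or.inl fun z hz => mem_closedArc.2 ((mem_closedArc.1 hz).trans h)
  · exact Or.inr fun z hz => mem_closedArc.2 ((mem_closedArc.1 hz).trans h)

lemma closedArc_union_closedArc (a b c : S1) :
    closedArc a b ∪ closedArc b c = closedArc a c ∨ closedArc a b ∪ closedArc b c = univ := by
  have hb : ∀ w, w - b = (w - a) - (b - a) := fun w => by abel
  have hs := fun w => argS1_nonneg (w - a)
  have hs' := fun w => argS1_lt_one (w - a)
  rcases le_or_gt (argS1 (b - a)) (argS1 (c - a)) with hbc | hcb
  · refine Or.inl (ext fun z => ?_)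
    simp only [mem_union, mem_closedArc, hb z, hb c, argS1_sub_of_le hbc]
    rcases le_or_gt (argS1 (b - a)) (argS1 (z - a)) with hz | hz
    · rw [argS1_sub_of_le hz]
      constructor
      · rintro (h | h) <;> linarith
      · intro h; exact Or.inr (by linarith)
    · rw [argS1_sub_of_lt hz]
      constructor
      · rintro (h | h) <;> linarith [hs' c, hs z]
      · intro h; exact Or.inl hz.le
  · refine Or.inr (eq_univ_of_forall fun z => ?_)
    simp only [mem_union, mem_closedArc, hb z, hb c, argS1_sub_of_lt hcb]
    rcases le_or_gt (argS1 (b - a)) (argS1 (z - a)) with hz | hz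
    · rw [argS1_sub_of_le hz]
      exact Or.inr (by linarith [hs' z, hs c])
    · exact Or.inl hz.le

lemma closedArc_subset_ball {a b : S1} {δ : ℝ} (h : argS1 (b - a) < δ) :
    closedArc a b ⊆ Metric.ball a δ := fun z hz => by
  rw [Metric.mem_ball, dist_eq_norm]
  exact (norm_le_argS1 _).trans_lt ((mem_closedArc.1 hz).trans_lt h)

lemma Set.finite_of_forall_dist_lt_imp_eq {ι X : Type*} [PseudoMetricSpace X] [CompactSpace X]
    {s : Set ι} {f : ι → X} {δ : ℝ} (hδ : 0 < δ)
    (h : ∀ i ∈ s, ∀ j ∈ s, dist (f i) (f j) < δ → i = j) : s.Finite := by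
  obtain ⟨t, -, ht, hcover⟩ :=
    finite_cover_balls_of_compact (isCompact_univ (X := X)) (half_pos hδ)
  have hs : s ⊆ ⋃ x ∈ t, {i ∈ s | f i ∈ Metric.ball x (δ / 2)} := fun i hi => by
    obtain ⟨x, hx, hix⟩ := mem_iUnion₂.1 (hcover (mem_univ (f i)))
    exact mem_iUnion₂.2 ⟨x, hx, hi, hix⟩
  refine (ht.biUnion fun x _ => Subsingleton.finite ?_).subset hs
  rintro i ⟨hi, hix⟩ j ⟨hj, hjx⟩
  rw [Metric.mem_ball] at hix hjx
  exact h i hi j hj (by linarith [dist_triangle_right (f i) (f j) x])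

lemma IsMinimalInvariant.inter_eq_empty {F : Set HomS1} {K K' : Set S1}
    (hK : IsMinimalInvariant F K) (hK' : IsMinimalInvariant F K') (hne : K ≠ K') :
    K ∩ K' = ∅ := by
  by_contra h
  have hinv : InvariantUnder F (K ∩ K') := fun f hf =>
    (image_inter_subset f K K').trans (inter_subset_inter (hK.2.2.1 f hf) (hK'.2.2.1 f hf))
  have hcl : IsClosed (K ∩ K') := hK.2.1.inter hK'.2.1
  have hnon := nonempty_iff_ne_empty.2 h
  exact hne ((hK.2.2.2 _ inter_subset_left hnon hcl hinv).symm.trans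
    (hK'.2.2.2 _ inter_subset_right hnon hcl hinv))

lemma exists_thickening_disjoint_minimalSets {F : Set HomS1} (hfin : (minimalSets F).Finite)
    {K : Set S1} (hK : K ∈ minimalSets F) :
    ∃ δ > 0, ∀ K' ∈ minimalSets F, K' ≠ K → Metric.thickening δ K ∩ K' = ∅ := by
  set L := ⋃ K' ∈ minimalSets F \ {K}, K'
  have hL : IsClosed L :=
    (hfin.subset sdiff_subset).isClosed_biUnion fun K' hK' => hK'.1.2.1
  have hKL : K ⊆ Lᶜ := fun p hp hpL => by
    obtain ⟨K', ⟨hK', hne⟩, hpK'⟩ := mem_iUnion₂.1 hpL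
    exact (eq_empty_iff_forall_notMem.1 (IsMinimalInvariant.inter_eq_empty hK hK' (Ne.symm hne)))
      p ⟨hp, hpK'⟩
  obtain ⟨δ, hδ, hsub⟩ := hK.2.1.isCompact.exists_thickening_subset_open hL.isOpen_compl hKL
  refine ⟨δ, hδ, fun K' hK' hne => eq_empty_iff_forall_notMem.2 fun z ⟨hz, hzK'⟩ => ?_⟩
  exact hsub hz (mem_iUnion₂.2 ⟨K', ⟨hK', hne⟩, hzK'⟩)

/-- Two members of `E_K` are equal as soon as the arc from the start of one to the start of the
other avoids the other minimal sets: otherwise the union of these arcs with the first member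
would be a strictly larger admissible arc, or the whole circle. -/
lemma eq_of_mem_EK_of_inter_closedArc_eq_empty {F : Set HomS1} {K : Set S1} {x y x' y' : S1}
    (hother : ∃ K' ∈ minimalSets F, K' ≠ K) (hx' : x' ∈ K) (hy : y ∈ K)
    (hI : closedArc x y ∈ EK F K) (hJ : closedArc x' y' ∈ EK F K)
    (hgap : ∀ K' ∈ minimalSets F, K' ≠ K → closedArc x' x ∩ K' = ∅) :
    closedArc x y = closedArc x' y' := by
  have hU : ∀ K' ∈ minimalSets F, K' ≠ K →
      (closedArc x' x ∪ closedArc x y) ∩ K' = ∅ := fun K' hK' hne => by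
    rw [union_inter_distrib_right, hgap K' hK' hne, hI.1.2 K' hK' hne, union_empty]
  rcases closedArc_union_closedArc x' x y with hUeq | hUeq
  · rw [hUeq] at hU
    have hgap' : IsGapArc F K (closedArc x' y) := ⟨⟨x', hx', y, hy, rfl⟩, hU⟩
    have hIeq : closedArc x' y = closedArc x y := hI.2 _ hgap' (hUeq ▸ subset_union_right)
    rcases closedArc_subset_or_subset x' y y' with h | h
    · exact (hI.2 _ hJ.1 (hIeq ▸ h)).symm
    · exact hIeq.symm.trans (hJ.2 _ hgap' h)
  · obtain ⟨K', hK', hne⟩ := hother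
    obtain ⟨z, hz⟩ := hK'.1
    exact ((eq_empty_iff_forall_notMem.1 (hU K' hK' hne)) z ⟨hUeq ▸ mem_univ z, hz⟩).elim

/-- **Lemma 3.2.** If the collection of `F`-invariant minimal sets is finite with at
least two elements, then for every minimal set `K` the family `E_K` is finite. -/
theorem statement5 (F : Set HomS1) (hfin : (minimalSets F).Finite)
    (hcard : 2 ≤ (minimalSets F).ncard) :
    ∀ K ∈ minimalSets F, (EK F K).Finite := by
  intro K hK
  have hother : ∃ K' ∈ minimalSets F, K' ≠ K := exists_ne_of_one_lt_ncard hcard K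
  obtain ⟨δ, hδ, hthick⟩ := exists_thickening_disjoint_minimalSets hfin hK
  have hgap : ∀ {x' x : S1}, x' ∈ K → argS1 (x - x') < δ →
      ∀ K' ∈ minimalSets F, K' ≠ K → closedArc x' x ∩ K' = ∅ :=
    fun hx' hlt K' hK' hne => subset_eq_empty (inter_subset_inter_left K'
      ((closedArc_subset_ball hlt).trans (Metric.ball_subset_thickening hx' δ)))
      (hthick K' hK' hne)
  choose! startPt hstart endPt hend hIeq using fun I (hI : I ∈ EK F K) => hI.1.1
  refine finite_of_forall_dist_lt_imp_eq (f := startPt) hδ fun I hI J hJ hdist => ?_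
  have hI' := hIeq I hI ▸ hI
  have hJ' := hIeq J hJ ▸ hJ
  rw [hIeq I hI, hIeq J hJ]
  rw [dist_eq_norm] at hdist
  rcases argS1_lt_or_argS1_neg_lt_of_norm_lt hdist with h | h
  · exact eq_of_mem_EK_of_inter_closedArc_eq_empty hother (hstart J hJ) (hend I hI) hI' hJ'
      (hgap (hstart J hJ) h)
  · exact (eq_of_mem_EK_of_inter_closedArc_eq_empty hother (hstart I hI) (hend J hJ) hJ' hI'
      (hgap (hstart I hI) (by rwa [neg_sub] at h))).symm
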